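/- arXiv:1103.4577 — 3 statements merged into one kernel-verified Lean document; each statement's English description precedes it below -/
import Mathlib

section
/- Let Δ and Θ be distributions over S and T respectively, and R ⊆ S × T. Then Δ R† Θ if and only if there exist a finite index set I, probabilities p_i with Σ_{i∈I} p_i = 1, and states s_i ∈ S, t_i ∈ T for each i ∈ I (not necessarily distinct), such that Δ = Σ_{i∈I} p_i·s̄_i, Θ = Σ_{i∈I} p_i·t̄_i, and s_i R t_i for every i ∈ I. -/
/-- A finitely supported (discrete) probability distribution over `S`. -/
structure FinDist (S : Type*) where
  w : S →₀ ℝ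
  nonneg : ∀ s, 0 ≤ w s
  sum_one : w.sum (fun _ p => p) = 1

/-- The point distribution at `s`. -/
noncomputable def FinDist.point {S : Type*} (s : S) : FinDist S where
  w := Finsupp.single s 1
  nonneg := by
    classical
    intro t
    simp [Finsupp.single_apply]
    split <;> norm_num
  sum_one := by
    classical
    simp [Finsupp.sum_single_index]

/-- The lifting `R†` of a relation `R ⊆ S × T` to distributions: the smallest
relation relating point distributions of related states and closed under
convex combinations. -/
inductive Lift {S T : Type*} (R : S → T → Prop) : FinDist S → FinDist T → Prop
  | point {s : S} {t : T} :
      R s t → Lift R (FinDist.point s) (FinDist.point t)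
  | convex (I : Finset ℕ) (p : ℕ → ℝ)
      (hp : ∀ i ∈ I, 0 ≤ p i) (hsum : ∑ i ∈ I, p i = 1)
      (Δs : ℕ → FinDist S) (Θs : ℕ → FinDist T)
      (h : ∀ i ∈ I, Lift R (Δs i) (Θs i))
      (Δ : FinDist S) (Θ : FinDist T)
      (hΔ : Δ.w = ∑ i ∈ I, p i • (Δs i).w)
      (hΘ : Θ.w = ∑ i ∈ I, p i • (Θs i).w) :
      Lift R Δ Θ

/-- Flattening a doubly-indexed sum via `Nat.pair`. -/
lemma sum_pair_flatten {M : Type*} [AddCommMonoid M] (I : Finset ℕ)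
    (Ii : (i : ℕ) → i ∈ I → Finset ℕ)
    (f : ℕ → M)
    (g : (i : ℕ) → (h : i ∈ I) → ℕ → M)
    (hf : ∀ (i : ℕ) (h : i ∈ I), ∀ j ∈ Ii i h, f (Nat.pair i j) = g i h j) :
    ∑ n ∈ I.attach.biUnion (fun i => (Ii i.1 i.2).image (Nat.pair i.1)), f n
      = ∑ i ∈ I.attach, ∑ j ∈ Ii i.1 i.2, g i.1 i.2 j := by
  rw [Finset.sum_biUnion]
  · apply Finset.sum_congr rfl
    intro i _
    rw [Finset.sum_image (by
      intro a _ b _ h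
      exact ((Nat.pair_eq_pair.mp h).2))]
    exact Finset.sum_congr rfl (hf i.1 i.2)
  · intro a _ b _ hab
    simp only [Function.onFun, Finset.disjoint_left, Finset.mem_image]
    rintro n ⟨j, _, rfl⟩ ⟨k, _, hk⟩
    exact hab (Subtype.ext (Nat.pair_eq_pair.mp hk).1.symm)

/-- `Δ R† Θ` iff there are a finite index set `I`, probabilities `p i`
summing to `1`, and (not necessarily distinct) states `s i`, `t i` with
`Δ = ∑ i ∈ I, p i • point (s i)`, `Θ = ∑ i ∈ I, p i • point (t i)` and
`R (s i) (t i)` for every `i ∈ I`. -/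
theorem lift_iff_point_decomposition {S T : Type*} (R : S → T → Prop)
    (Δ : FinDist S) (Θ : FinDist T) :
    Lift R Δ Θ ↔
      ∃ (I : Finset ℕ) (p : ℕ → ℝ) (s : ℕ → S) (t : ℕ → T),
        (∀ i ∈ I, 0 ≤ p i) ∧ (∑ i ∈ I, p i = 1) ∧
        Δ.w = ∑ i ∈ I, p i • (FinDist.point (s i)).w ∧
        Θ.w = ∑ i ∈ I, p i • (FinDist.point (t i)).w ∧
        ∀ i ∈ I, R (s i) (t i) := by
  classical
  constructor
  · intro h
    induction h with
    | @point s t hst =>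
      exact ⟨{0}, fun _ => 1, fun _ => s, fun _ => t, by simp, by simp, by simp,
        by simp, by simpa using hst⟩
    | convex I p hp hsum Δs Θs h Δ Θ hΔ hΘ ih =>
      choose Ii pi si ti hpi hsumi hΔi hΘi hRi using ih
      have hSne : Nonempty S := by
        have hw : Δ.w ≠ 0 := by
          intro h0
          have h1 := Δ.sum_one
          rw [h0] at h1
          simp [Finsupp.sum] at h1
        exact ⟨(Finsupp.support_nonempty_iff.mpr hw).choose⟩
      have hTne : Nonempty T := by
        have hw : Θ.w ≠ 0 := by
          intro h0
          have h1 := Θ.sum_one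
          rw [h0] at h1
          simp [Finsupp.sum] at h1
        exact ⟨(Finsupp.support_nonempty_iff.mpr hw).choose⟩
      set J : Finset ℕ :=
        I.attach.biUnion (fun i => (Ii i.1 i.2).image (Nat.pair i.1)) with hJdef
      refine ⟨J,
        fun n => if h : (Nat.unpair n).1 ∈ I then
          p (Nat.unpair n).1 * pi _ h (Nat.unpair n).2 else 0,
        fun n => if h : (Nat.unpair n).1 ∈ I then
          si _ h (Nat.unpair n).2 else Classical.choice hSne,
        fun n => if h : (Nat.unpair n).1 ∈ I then
          ti _ h (Nat.unpair n).2 else Classical.choice hTne,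
        ?_, ?_, ?_, ?_, ?_⟩
      · intro n hn
        simp only [hJdef, Finset.mem_biUnion, Finset.mem_image, Finset.mem_attach] at hn
        obtain ⟨i, -, j, hj, rfl⟩ := hn
        simp only [Nat.unpair_pair]
        rw [dif_pos i.2]
        exact mul_nonneg (hp i.1 i.2) (hpi i.1 i.2 j (by simpa using hj))
      · rw [hJdef, sum_pair_flatten I Ii _
            (fun i h j => p i * pi i h j)
            (by intro i h j hj; simp only [Nat.unpair_pair]; rw [dif_pos h])]
        calc ∑ i ∈ I.attach, ∑ j ∈ Ii i.1 i.2, p i.1 * pi i.1 i.2 j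
            = ∑ i ∈ I.attach, p i.1 := by
              apply Finset.sum_congr rfl
              intro i _
              rw [← Finset.mul_sum, hsumi i.1 i.2, mul_one]
          _ = ∑ i ∈ I, p i := Finset.sum_attach _ _
          _ = 1 := hsum
      · rw [hJdef, sum_pair_flatten I Ii _
            (fun i h j => (p i * pi i h j) •
              (FinDist.point (si i h j)).w)
            (by intro i h j hj; simp only [Nat.unpair_pair]; rw [dif_pos h, dif_pos h])]
        rw [hΔ, ← Finset.sum_attach I (fun i => p i • (Δs i).w)]
        apply Finset.sum_congr rfl
        intro i _
        rw [hΔi i.1 i.2, Finset.smul_sum]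
        apply Finset.sum_congr rfl
        intro j _
        rw [smul_smul]
      · rw [hJdef, sum_pair_flatten I Ii _
            (fun i h j => (p i * pi i h j) •
              (FinDist.point (ti i h j)).w)
            (by intro i h j hj; simp only [Nat.unpair_pair]; rw [dif_pos h, dif_pos h])]
        rw [hΘ, ← Finset.sum_attach I (fun i => p i • (Θs i).w)]
        apply Finset.sum_congr rfl
        intro i _
        rw [hΘi i.1 i.2, Finset.smul_sum]
        apply Finset.sum_congr rfl
        intro j _
        rw [smul_smul]
      · intro n hn
        simp only [hJdef, Finset.mem_biUnion, Finset.mem_image, Finset.mem_attach] at hn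
        obtain ⟨i, -, j, hj, rfl⟩ := hn
        simp only [Nat.unpair_pair]
        rw [dif_pos i.2, dif_pos i.2]
        exact hRi i.1 i.2 j (by simpa using hj)
  · rintro ⟨I, p, s, t, hp, hsum, hΔ, hΘ, hR⟩
    exact Lift.convex I p hp hsum (fun i => FinDist.point (s i))
      (fun i => FinDist.point (t i)) (fun i hi => Lift.point (hR i hi)) Δ Θ hΔ hΘ
end

section
/- In any finitely branching pLTS, the relation ∼_ω = ⋂_{n≥0} ∼_n coincides with probabilistic bisimilarity ∼: for all states s, t, s ∼ t if and only if s ∼_n t for all n ≥ 0. -/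
/-- A probabilistic labelled transition system: a set of states `S`, actions
`Act`, and a transition relation `→ ⊆ S × Act × D(S)`. -/
structure PLTS (S : Type*) (Act : Type*) where
  trans : S → Act → FinDist S → Prop

/-- The approximants `∼ₙ` of probabilistic bisimilarity: `∼₀` is the total
relation, and `s ∼ₙ₊₁ t` iff each transition of one state is matched by a
transition of the other with the resulting distributions related by `(∼ₙ)†`. -/
def approx {S Act : Type*} (L : PLTS S Act) : ℕ → S → S → Prop
  | 0, _, _ => True
  | n + 1, s, t =>
      (∀ a Δ, L.trans s a Δ → ∃ Θ, L.trans t a Θ ∧ Lift (approx L n) Δ Θ) ∧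
      (∀ a Θ, L.trans t a Θ → ∃ Δ, L.trans s a Δ ∧ Lift (approx L n) Δ Θ)

/-- `R` is a probabilistic bisimulation if, whenever `s R t`, each transition
of either state is matched by a transition of the other, with the resulting
distributions related by the lifted relation `R†`. -/
def IsBisimulation {S Act : Type*} (L : PLTS S Act) (R : S → S → Prop) : Prop :=
  ∀ s t, R s t →
    (∀ a Δ, L.trans s a Δ → ∃ Θ, L.trans t a Θ ∧ Lift R Δ Θ) ∧
    (∀ a Θ, L.trans t a Θ → ∃ Δ, L.trans s a Δ ∧ Lift R Δ Θ)

/-- Probabilistic bisimilarity `∼`: the largest probabilistic bisimulation,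
i.e. the union of all probabilistic bisimulations. -/
def Bisim {S Act : Type*} (L : PLTS S Act) (s t : S) : Prop :=
  ∃ R, IsBisimulation L R ∧ R s t

/-- A pLTS is finitely branching if every state has finitely many outgoing
transitions. -/
def FinitelyBranching {S Act : Type*} (L : PLTS S Act) : Prop :=
  ∀ s, { p : Act × FinDist S | L.trans s p.1 p.2 }.Finite

theorem lift_mono {S T : Type*} {R R' : S → T → Prop} (h : ∀ s t, R s t → R' s t)
    {Δ : FinDist S} {Θ : FinDist T} (hl : Lift R Δ Θ) : Lift R' Δ Θ := by
  induction hl with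
  | point hr => exact .point (h _ _ hr)
  | convex I p hp hsum Δs Θs hrel Δ Θ hΔ hΘ ih =>
      exact .convex I p hp hsum Δs Θs ih Δ Θ hΔ hΘ

theorem lift_mono_supp {S T : Type*} {R R' : S → T → Prop}
    {Δ : FinDist S} {Θ : FinDist T} (hl : Lift R Δ Θ) :
    (∀ s t, Δ.w s ≠ 0 → Θ.w t ≠ 0 → R s t → R' s t) → Lift R' Δ Θ := by
  induction hl with
  | @point s t hr =>
      intro h
      refine .point (h s t ?_ ?_ hr) <;> simp [FinDist.point]
  | @convex I p hp hsum Δs Θs hrel Δ Θ hΔ hΘ ih =>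
      intro h
      refine Lift.convex (I.filter fun i => p i ≠ 0) p
        (fun i hi => hp i (Finset.mem_filter.mp hi).1) ?_ Δs Θs ?_ Δ Θ ?_ ?_
      · rw [Finset.sum_filter_of_ne (fun i _ hne => hne)]; exact hsum
      · intro i hi
        obtain ⟨hiI, hpi⟩ := Finset.mem_filter.mp hi
        have hpip : 0 < p i := (hp i hiI).lt_of_ne (Ne.symm hpi)
        refine ih i hiI ?_
        intro s u hs hu hr
        refine h s u ?_ ?_ hr
        · rw [hΔ]
          have : (0:ℝ) < ∑ j ∈ I, (p j • (Δs j).w) s := by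
            refine Finset.sum_pos' (fun j hj => ?_) ⟨i, hiI, ?_⟩
            · exact mul_nonneg (hp j hj) ((Δs j).nonneg s)
            · exact mul_pos hpip (((Δs i).nonneg s).lt_of_ne (Ne.symm hs))
          rw [Finsupp.finset_sum_apply]
          exact ne_of_gt this
        · rw [hΘ]
          have : (0:ℝ) < ∑ j ∈ I, (p j • (Θs j).w) u := by
            refine Finset.sum_pos' (fun j hj => ?_) ⟨i, hiI, ?_⟩
            · exact mul_nonneg (hp j hj) ((Θs j).nonneg u)
            · exact mul_pos hpip (((Θs i).nonneg u).lt_of_ne (Ne.symm hu))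
          rw [Finsupp.finset_sum_apply]
          exact ne_of_gt this
      · rw [hΔ, Finset.sum_filter_of_ne]
        exact fun i _ hne hpi => hne (by rw [hpi, zero_smul])
      · rw [hΘ, Finset.sum_filter_of_ne]
        exact fun i _ hne hpi => hne (by rw [hpi, zero_smul])

theorem approx_antitone {S Act : Type*} (L : PLTS S Act) :
    ∀ n, ∀ s t : S, approx L (n + 1) s t → approx L n s t := by
  intro n
  induction n with
  | zero => intro s t _; trivial
  | succ n ih =>
      rintro s t ⟨h1, h2⟩
      exact ⟨fun a Δ hΔ => (h1 a Δ hΔ).imp fun Θ hΘ => ⟨hΘ.1, lift_mono ih hΘ.2⟩,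
             fun a Θ hΘ => (h2 a Θ hΘ).imp fun Δ hΔ => ⟨hΔ.1, lift_mono ih hΔ.2⟩⟩

theorem approx_of_le {S Act : Type*} (L : PLTS S Act) {m n : ℕ} (h : m ≤ n)
    {s t : S} (ha : approx L n s t) : approx L m s t := by
  induction n, h using Nat.le_induction with
  | base => exact ha
  | succ n hn ih => exact ih (approx_antitone L n s t ha)

theorem approx_of_bisim {S Act : Type*} {L : PLTS S Act} {R : S → S → Prop}
    (hR : IsBisimulation L R) : ∀ n, ∀ s t : S, R s t → approx L n s t := by
  intro n
  induction n with
  | zero => intro s t _; trivial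
  | succ n ih =>
      intro s t hst
      obtain ⟨h1, h2⟩ := hR s t hst
      exact ⟨fun a Δ hΔ => (h1 a Δ hΔ).imp fun Θ hΘ => ⟨hΘ.1, lift_mono ih hΘ.2⟩,
             fun a Θ hΘ => (h2 a Θ hΘ).imp fun Δ hΔ => ⟨hΔ.1, lift_mono ih hΔ.2⟩⟩

theorem lift_forall_approx {S Act : Type*} (L : PLTS S Act) {Δ Θ : FinDist S}
    (h : ∀ n, Lift (approx L n) Δ Θ) :
    Lift (fun s t => ∀ n, approx L n s t) Δ Θ := by
  classical
  set F : ℕ → Finset (S × S) :=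
    fun n => (Δ.w.support ×ˢ Θ.w.support).filter (fun q => approx L n q.1 q.2) with hF
  have hanti : ∀ {m n : ℕ}, m ≤ n → F n ⊆ F m := by
    intro m n hmn q hq
    rw [hF, Finset.mem_filter] at hq ⊢
    exact ⟨hq.1, approx_of_le L hmn hq.2⟩
  obtain ⟨N, hN⟩ : ∃ N, ∀ n, (F N).card ≤ (F n).card := by
    have hne : (Set.range fun n => (F n).card).Nonempty := ⟨(F 0).card, 0, rfl⟩
    obtain ⟨N, hNeq⟩ := Nat.sInf_mem hne
    refine ⟨N, fun n => ?_⟩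
    have : (F N).card = sInf (Set.range fun n => (F n).card) := hNeq
    rw [this]
    exact Nat.sInf_le ⟨n, rfl⟩
  have hsub : ∀ n, F N ⊆ F n := by
    intro n
    rcases le_total n N with hle | hle
    · exact hanti hle
    · rw [Finset.eq_of_subset_of_card_le (hanti hle) (hN n)]
  refine lift_mono_supp (h N) ?_
  intro a b ha hb hr n
  have hmem : (a, b) ∈ F N := by
    rw [hF, Finset.mem_filter, Finset.mem_product]
    exact ⟨⟨Finsupp.mem_support_iff.mpr ha, Finsupp.mem_support_iff.mpr hb⟩, hr⟩
  have := hsub n hmem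
  rw [hF, Finset.mem_filter] at this
  exact this.2

theorem match_omega {S Act : Type*} (L : PLTS S Act) (hfb : FinitelyBranching L)
    {v : S} {a : Act} {Δ : FinDist S}
    (hch : ∀ n, ∃ Θ, L.trans v a Θ ∧ Lift (approx L n) Δ Θ) :
    ∃ Θ, L.trans v a Θ ∧ Lift (fun s t => ∀ n, approx L n s t) Δ Θ := by
  classical
  choose f hf1 hf2 using hch
  have hfin : {Θ : FinDist S | L.trans v a Θ}.Finite :=
    ((hfb v).image Prod.snd).subset (fun Θ hΘ => ⟨(a, Θ), hΘ, rfl⟩)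
  haveI := hfin.to_subtype
  obtain ⟨Θ0, hΘ0⟩ :=
    Finite.exists_infinite_fiber (fun n => (⟨f n, hf1 n⟩ : {Θ : FinDist S | L.trans v a Θ}))
  refine ⟨Θ0.1, Θ0.2, lift_forall_approx L fun n => ?_⟩
  obtain ⟨m, hm, hlt⟩ := (Set.infinite_coe_iff.mp hΘ0).exists_gt n
  have hfm : f m = Θ0.1 := congrArg Subtype.val (by simpa using hm)
  exact lift_mono (fun s t h => approx_of_le L hlt.le h) (hfm ▸ hf2 m)

theorem isBisim_omega {S Act : Type*} (L : PLTS S Act) (hfb : FinitelyBranching L) :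
    IsBisimulation L (fun s t => ∀ n, approx L n s t) := by
  intro s t hst
  constructor
  · intro a Δ hΔ
    exact match_omega L hfb (fun n => (hst (n + 1)).1 a Δ hΔ)
  · intro a Θ hΘ
    have hch : ∀ n, ∃ Δ, L.trans s a Δ ∧ Lift (approx L n) Δ Θ :=
      fun n => (hst (n + 1)).2 a Θ hΘ
    -- mirror argument
    classical
    choose f hf1 hf2 using hch
    have hfin : {Δ : FinDist S | L.trans s a Δ}.Finite :=
      ((hfb s).image Prod.snd).subset (fun Δ hΔ => ⟨(a, Δ), hΔ, rfl⟩)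
    haveI := hfin.to_subtype
    obtain ⟨Δ0, hΔ0⟩ :=
      Finite.exists_infinite_fiber (fun n => (⟨f n, hf1 n⟩ : {Δ : FinDist S | L.trans s a Δ}))
    refine ⟨Δ0.1, Δ0.2, lift_forall_approx L fun n => ?_⟩
    obtain ⟨m, hm, hlt⟩ := (Set.infinite_coe_iff.mp hΔ0).exists_gt n
    have hfm : f m = Δ0.1 := congrArg Subtype.val (by simpa using hm)
    exact lift_mono (fun u v h => approx_of_le L hlt.le h) (hfm ▸ hf2 m)

/-- In a finitely branching pLTS, `∼_ω = ⋂ₙ ∼ₙ` coincides with probabilistic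
bisimilarity: `s ∼ t` iff `s ∼ₙ t` for all `n`. -/
theorem bisim_iff_forall_approx {S Act : Type*} (L : PLTS S Act)
    (hfb : FinitelyBranching L) (s t : S) :
    Bisim L s t ↔ ∀ n : ℕ, approx L n s t := by
  constructor
  · rintro ⟨R, hR, hst⟩ n
    exact approx_of_bisim hR n s t hst
  · intro h
    exact ⟨_, isBisim_omega L hfb, h⟩
end

section
/- (Adequacy) Let s and t be any two states in a finitely branching pLTS. Then s ∼ t if and only if s and t satisfy exactly the same formulae of the logic L, i.e. for every state formula φ of L, s ⊨ φ iff t ⊨ φ. -/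
/-- State formulae of the probabilistic Hennessy–Milner logic `L`:
`φ ::= ⊤ | φ₁ ∧ φ₂ | ⟨a⟩ψ | ¬φ` where the distribution formula
`ψ = ⊕_{i} p i · φ i` (with `p` a finite tuple of probabilities summing to
`1`) is inlined into the diamond modality. -/
inductive SForm (Act : Type*) : Type _
  | top : SForm Act
  | and : SForm Act → SForm Act → SForm Act
  | neg : SForm Act → SForm Act
  | dia (a : Act) (n : ℕ) (p : Fin n → ℝ)
      (hp : ∀ i, 0 ≤ p i) (hsum : ∑ i, p i = 1)
      (φ : Fin n → SForm Act) : SForm Act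

/-- The satisfaction relation `s ⊨ φ`. In the diamond case,
`s ⊨ ⟨a⟩⊕ᵢ p i · φ i` iff `s −a→ Δ` for some `Δ` that decomposes as a convex
combination `Δ = ∑ i, p i • Δs i` with every state in the support of `Δs i`
satisfying `φ i`. -/
def sat {S Act : Type*} (L : PLTS S Act) : S → SForm Act → Prop
  | _, .top => True
  | s, .and φ₁ φ₂ => sat L s φ₁ ∧ sat L s φ₂
  | s, .neg φ => ¬ sat L s φ
  | s, .dia a n p _ _ φ =>
      ∃ Δ : FinDist S, L.trans s a Δ ∧
        ∃ Δs : Fin n → FinDist S,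
          Δ.w = ∑ i, p i • (Δs i).w ∧
          ∀ i, ∀ t ∈ (Δs i).w.support, sat L t (φ i)

/-! Soundness: a lifting `Lift R Δ Θ` is presented by a kernel `K` (conditional probabilities)
with `Θ = Δ.bind K` and each `K u` supported on `R`-successors of `u`. Pushing every component of
a decomposition `Δ = ∑ᵢ pᵢ • Δᵢ` through `K` decomposes `Θ` with the same weights, which is the
diamond case of the induction on formulae.

Completeness: by finite branching, the states reached in one step from `t` form a finite set `G`,
and for each `u` a finite conjunction `χ u` of distinguishing formulae characterises `u` up to
logical equivalence within `G`. If `s −a→ Δ`, then `s ⊨ ⟨a⟩ ⊕ᵤ Δ(u) · χ u`, hence so does `t`, and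
the decomposition witnessing this is a lifting of logical equivalence. -/

namespace FinDist

variable {S T ι : Type*}

theorem point_w (s : S) : (point s).w = Finsupp.single s 1 := rfl

theorem mem_support_point_w {s t : S} (h : t ∈ (point s).w.support) : t = s := by
  rwa [point_w, Finsupp.support_single s one_ne_zero, Finset.mem_singleton] at h

theorem mul_le_of_w_eq_sum {I : Finset ι} {p : ι → ℝ} (hp : ∀ i ∈ I, 0 ≤ p i)
    {Δ : FinDist S} {Δs : ι → FinDist S} (hΔ : Δ.w = ∑ i ∈ I, p i • (Δs i).w)
    {i : ι} (hi : i ∈ I) (u : S) : p i * (Δs i).w u ≤ Δ.w u := by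
  rw [hΔ, Finsupp.finsetSum_apply]
  exact Finset.single_le_sum (f := fun j => (p j • (Δs j).w) u)
    (fun j hj => mul_nonneg (hp j hj) ((Δs j).nonneg u)) hi

theorem mem_support_of_w_eq_sum {n : ℕ} {p : Fin n → ℝ} (hp : ∀ i, 0 ≤ p i)
    {Δ : FinDist S} {Δs : Fin n → FinDist S} (hΔ : Δ.w = ∑ i, p i • (Δs i).w)
    {i : Fin n} (hi : p i ≠ 0) {u : S} (hu : u ∈ (Δs i).w.support) : u ∈ Δ.w.support := by
  have hpos : 0 < p i * (Δs i).w u :=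
    mul_pos ((hp i).lt_of_ne' hi) (((Δs i).nonneg u).lt_of_ne' (Finsupp.mem_support_iff.1 hu))
  exact Finsupp.mem_support_iff.2
    (hpos.trans_le (mul_le_of_w_eq_sum (fun i _ => hp i) hΔ (Finset.mem_univ i) u)).ne'

theorem sum_finsetSum_smul_w {I : Finset ι} (q : ι → ℝ) (Δs : ι → FinDist S) :
    (∑ i ∈ I, q i • (Δs i).w).sum (fun _ a => a) = ∑ i ∈ I, q i := by
  rw [← Finsupp.sum_finsetSum_index (fun _ => rfl) (fun _ _ _ => rfl)]
  refine Finset.sum_congr rfl fun i _ => ?_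
  rw [Finsupp.sum_smul_index (fun _ => rfl), ← Finsupp.mul_sum, (Δs i).sum_one, mul_one]

noncomputable def mix (I : Finset ι) (q : ι → ℝ) (hq : ∀ i ∈ I, 0 ≤ q i)
    (hq1 : ∑ i ∈ I, q i = 1) (Δs : ι → FinDist S) : FinDist S where
  w := ∑ i ∈ I, q i • (Δs i).w
  nonneg u := by
    rw [Finsupp.finsetSum_apply]
    exact Finset.sum_nonneg fun i hi => mul_nonneg (hq i hi) ((Δs i).nonneg u)
  sum_one := (sum_finsetSum_smul_w q Δs).trans hq1

noncomputable def bind (Δ : FinDist S) (K : S → FinDist T) : FinDist T :=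
  mix Δ.w.support Δ.w (fun u _ => Δ.nonneg u) Δ.sum_one K

theorem bind_w (Δ : FinDist S) (K : S → FinDist T) :
    (Δ.bind K).w = Finsupp.linearCombination ℝ (fun u => (K u).w) Δ.w := by
  rw [Finsupp.linearCombination_apply]; rfl

theorem exists_mem_support_of_mem_support_mix {I : Finset ι} {q : ι → ℝ} {hq : ∀ i ∈ I, 0 ≤ q i}
    {hq1 : ∑ i ∈ I, q i = 1} {Δs : ι → FinDist S} {u : S} (hu : u ∈ (mix I q hq hq1 Δs).w.support) :
    ∃ i ∈ I, q i ≠ 0 ∧ u ∈ (Δs i).w.support := by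
  classical
  obtain ⟨i, hi, hu⟩ := Finset.mem_biUnion.1 (Finsupp.support_finsetSum hu)
  exact ⟨i, hi, fun h => by simp [h] at hu, Finsupp.support_smul hu⟩

theorem exists_mem_support_of_mem_support_bind {Δ : FinDist S} {K : S → FinDist T} {v : T}
    (hv : v ∈ (Δ.bind K).w.support) : ∃ u ∈ Δ.w.support, v ∈ (K u).w.support :=
  let ⟨u, hu, _, hv⟩ := exists_mem_support_of_mem_support_mix hv
  ⟨u, hu, hv⟩

theorem bind_w_eq_sum {Δ : FinDist S} {U : Finset S} (hU : Δ.w.support ⊆ U) (K : S → FinDist T) :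
    (Δ.bind K).w = ∑ u ∈ U, Δ.w u • (K u).w :=
  Finsupp.sum_of_support_subset Δ.w hU (fun u a => a • (K u).w) fun _ _ => zero_smul _ _

theorem exists_bind_eq_sum_smul_bind [Nonempty (FinDist T)] {I : Finset ι} {p : ι → ℝ}
    (hp : ∀ i ∈ I, 0 ≤ p i) {Δ : FinDist S} {Δs : ι → FinDist S}
    (hΔ : Δ.w = ∑ i ∈ I, p i • (Δs i).w) (K : ι → S → FinDist T) :
    ∃ K' : S → FinDist T,
      (∀ u ∈ Δ.w.support, ∀ v ∈ (K' u).w.support,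
        ∃ i ∈ I, u ∈ (Δs i).w.support ∧ v ∈ (K i u).w.support) ∧
      (Δ.bind K').w = ∑ i ∈ I, p i • ((Δs i).bind (K i)).w := by
  classical
  have hΔu (u : S) : Δ.w u = ∑ i ∈ I, p i * (Δs i).w u := by
    simp [hΔ, Finsupp.finsetSum_apply]
  -- `K' u` mixes the `K i u` in proportion to the share of the mass of `u` contributed by `Δs i`.
  let K' (u : S) : FinDist T :=
    if hu : Δ.w u = 0 then Classical.arbitrary _
    else mix I (fun i => p i * (Δs i).w u / Δ.w u)
      (fun i hi => div_nonneg (mul_nonneg (hp i hi) ((Δs i).nonneg u)) (Δ.nonneg u))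
      (by rw [← Finset.sum_div, ← hΔu, div_self hu]) (fun i => K i u)
  have hK' (u : S) : Δ.w u • (K' u).w = ∑ i ∈ I, (p i * (Δs i).w u) • (K i u).w := by
    by_cases hu : Δ.w u = 0
    · refine hu ▸ (zero_smul ℝ _).trans (Finset.sum_eq_zero fun i hi => ?_).symm
      have := mul_le_of_w_eq_sum hp hΔ hi u
      rw [le_antisymm (hu ▸ this) (mul_nonneg (hp i hi) ((Δs i).nonneg u)), zero_smul]
    · simp only [K', dif_neg hu, mix, Finset.smul_sum, smul_smul, mul_div_cancel₀ _ hu]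
  let U := Δ.w.support ∪ I.biUnion fun i => (Δs i).w.support
  refine ⟨K', fun u hu v hv => ?_, ?_⟩
  · simp only [K', dif_neg (Finsupp.mem_support_iff.1 hu)] at hv
    obtain ⟨i, hi, hq, hv⟩ := exists_mem_support_of_mem_support_mix hv
    exact ⟨i, hi, Finsupp.mem_support_iff.2 fun h => hq (by simp [h]), hv⟩
  · calc (Δ.bind K').w = ∑ u ∈ U, Δ.w u • (K' u).w := bind_w_eq_sum Finset.subset_union_left K'
      _ = ∑ i ∈ I, p i • ∑ u ∈ U, (Δs i).w u • (K i u).w := by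
          simp only [hK', Finset.smul_sum, smul_smul]
          exact Finset.sum_comm
      _ = ∑ i ∈ I, p i • ((Δs i).bind (K i)).w := by
          refine Finset.sum_congr rfl fun i hi => ?_
          rw [bind_w_eq_sum (Finset.subset_union_right.trans'
            (Finset.subset_biUnion_of_mem (fun i => (Δs i).w.support) hi))]

noncomputable def enum (Δ : FinDist S) (i : Fin Δ.w.support.card) : S :=
  Δ.w.support.equivFin.symm i

theorem enum_mem_support (Δ : FinDist S) (i : Fin Δ.w.support.card) :
    Δ.enum i ∈ Δ.w.support :=
  (Δ.w.support.equivFin.symm i).2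

theorem sum_enum {M : Type*} [AddCommMonoid M] (Δ : FinDist S) (f : S → M) :
    ∑ i, f (Δ.enum i) = ∑ u ∈ Δ.w.support, f u :=
  (Equiv.sum_comp Δ.w.support.equivFin.symm (fun u => f u)).trans (Finset.sum_coe_sort _ f)

theorem sum_w_enum (Δ : FinDist S) : ∑ i, Δ.w (Δ.enum i) = 1 :=
  (Δ.sum_enum Δ.w).trans Δ.sum_one

theorem w_eq_sum_enum (Δ : FinDist S) :
    Δ.w = ∑ i, Δ.w (Δ.enum i) • (point (Δ.enum i)).w := by
  rw [Δ.sum_enum fun u => Δ.w u • (point u).w]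
  conv_lhs => rw [← Finsupp.sum_single Δ.w]
  exact Finset.sum_congr rfl fun u _ => by
    rw [point_w, Finsupp.smul_single, smul_eq_mul, mul_one]

end FinDist

namespace Lift

variable {S T : Type*} {R : S → T → Prop}

theorem swap {R' : T → S → Prop} (hR : ∀ s t, R s t → R' t s) {Δ : FinDist S} {Θ : FinDist T}
    (h : Lift R Δ Θ) : Lift R' Θ Δ := by
  induction h with
  | point hst => exact point (hR _ _ hst)
  | convex I p hp hsum Δs Θs _ Δ Θ hΔ hΘ ih => exact convex I p hp hsum Θs Δs ih Θ Δ hΘ hΔ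

theorem convex_fin {n : ℕ} (p : Fin n → ℝ) (hp : ∀ i, 0 ≤ p i) (hsum : ∑ i, p i = 1)
    (Δs : Fin n → FinDist S) (Θs : Fin n → FinDist T) (h : ∀ i, Lift R (Δs i) (Θs i))
    (Δ : FinDist S) (Θ : FinDist T) (hΔ : Δ.w = ∑ i, p i • (Δs i).w)
    (hΘ : Θ.w = ∑ i, p i • (Θs i).w) : Lift R Δ Θ := by
  refine convex (Finset.range n) (fun k => if hk : k < n then p ⟨k, hk⟩ else 0) ?_ ?_
    (fun k => if hk : k < n then Δs ⟨k, hk⟩ else Δ) (fun k => if hk : k < n then Θs ⟨k, hk⟩ else Θ)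
    ?_ Δ Θ ?_ ?_
  · intro k hk
    rw [Finset.mem_range] at hk
    simpa [hk] using hp ⟨k, hk⟩
  · simpa [← Fin.sum_univ_eq_sum_range] using hsum
  · intro k hk
    rw [Finset.mem_range] at hk
    simpa [hk] using h ⟨k, hk⟩
  · simpa [← Fin.sum_univ_eq_sum_range, apply_dite] using hΔ
  · simpa [← Fin.sum_univ_eq_sum_range, apply_dite] using hΘ

theorem point_left {s : S} {Θ : FinDist T} (h : ∀ t ∈ Θ.w.support, R s t) :
    Lift R (FinDist.point s) Θ := by
  refine convex_fin (fun i => Θ.w (Θ.enum i)) (fun i => Θ.nonneg _) Θ.sum_w_enum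
    (fun _ => FinDist.point s) (fun i => FinDist.point (Θ.enum i))
    (fun i => point (h _ (Θ.enum_mem_support i))) _ _ ?_ Θ.w_eq_sum_enum
  rw [← Finset.sum_smul, Θ.sum_w_enum, one_smul]

theorem exists_kernel {Δ : FinDist S} {Θ : FinDist T} (h : Lift R Δ Θ) :
    ∃ K : S → FinDist T, (∀ s ∈ Δ.w.support, ∀ t ∈ (K s).w.support, R s t) ∧
      Θ.w = (Δ.bind K).w := by
  induction h with
  | @point s t hst =>
    refine ⟨fun _ => FinDist.point t, fun u hu v hv => ?_, ?_⟩
    · rwa [FinDist.mem_support_point_w hu, FinDist.mem_support_point_w hv]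
    · simp only [FinDist.bind_w, FinDist.point_w]
      rw [Finsupp.linearCombination_single, one_smul]
  | convex I p hp _ Δs Θs _ Δ Θ hΔ hΘ ih =>
    have : Nonempty (FinDist T) := ⟨Θ⟩
    choose! K hK hΘK using ih
    obtain ⟨K', hK', hΔK'⟩ := FinDist.exists_bind_eq_sum_smul_bind hp hΔ K
    refine ⟨K', fun u hu v hv => ?_, ?_⟩
    · obtain ⟨j, hj, hu, hv⟩ := hK' u hu v hv
      exact hK j hj u hu v hv
    · rw [hΘ, hΔK']
      exact Finset.sum_congr rfl fun j hj => by rw [hΘK j hj]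

end Lift

-- `Δ ⊨ ⊕ᵢ p i · P i`, with the state formulae of the paper generalised to predicates.
def FinDist.Splits {S : Type*} {n : ℕ} (Δ : FinDist S) (p : Fin n → ℝ) (P : Fin n → S → Prop) :
    Prop :=
  ∃ Δs : Fin n → FinDist S, Δ.w = ∑ i, p i • (Δs i).w ∧ ∀ i, ∀ u ∈ (Δs i).w.support, P i u

theorem Lift.splits {S : Type*} {R : S → S → Prop} {Δ Θ : FinDist S} (h : Lift R Δ Θ) {n : ℕ}
    {p : Fin n → ℝ} (hp : ∀ i, 0 ≤ p i) {P : Fin n → S → Prop}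
    (hR : ∀ i u v, R u v → P i u → P i v) (hΔ : Δ.Splits p P) : Θ.Splits p P := by
  classical
  obtain ⟨K, hK, hΘ⟩ := h.exists_kernel
  obtain ⟨Δs, hΔ, hP⟩ := hΔ
  -- A component of weight zero may leave the support of `Δ`, where `K` is uncontrolled.
  refine ⟨fun i => if p i = 0 then Δs i else (Δs i).bind K, ?_, fun i v hv => ?_⟩
  · rw [hΘ, FinDist.bind_w, hΔ, map_sum]
    refine Finset.sum_congr rfl fun i _ => ?_
    by_cases hpi : p i = 0
    · simp [hpi]
    · simp only [if_neg hpi, map_smul, FinDist.bind_w]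
  · by_cases hpi : p i = 0
    · simp only [if_pos hpi] at hv
      exact hP i v hv
    · simp only [if_neg hpi] at hv
      obtain ⟨u, hu, hv⟩ := FinDist.exists_mem_support_of_mem_support_bind hv
      exact hR i u v (hK u (FinDist.mem_support_of_w_eq_sum hp hΔ hpi hu) v hv) (hP i u hu)

theorem IsBisimulation.of_symm {S Act : Type*} {L : PLTS S Act} {R : S → S → Prop}
    (hsymm : ∀ s t, R s t → R t s)
    (h : ∀ s t, R s t → ∀ a Δ, L.trans s a Δ → ∃ Θ, L.trans t a Θ ∧ Lift R Δ Θ) :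
    IsBisimulation L R := fun s t hst =>
  ⟨h s t hst, fun a Θ hΘ =>
    let ⟨Δ, hΔ, hlift⟩ := h t s (hsymm s t hst) a Θ hΘ
    ⟨Δ, hΔ, hlift.swap hsymm⟩⟩

section Adequacy

variable {S Act : Type*} {L : PLTS S Act}

theorem sat_iff_of_isBisimulation {R : S → S → Prop} (hR : IsBisimulation L R) (φ : SForm Act) :
    ∀ {s t}, R s t → (sat L s φ ↔ sat L t φ) := by
  induction φ with
  | top => exact fun _ => Iff.rfl
  | and φ ψ ihφ ihψ => exact fun hst => and_congr (ihφ hst) (ihψ hst)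
  | neg φ ih => exact fun hst => not_congr (ih hst)
  | dia a n p hp _ φ ih =>
    intro s t hst
    constructor
    · rintro ⟨Δ, hΔ, hsplit⟩
      obtain ⟨Θ, hΘ, hlift⟩ := (hR s t hst).1 a Δ hΔ
      exact ⟨Θ, hΘ, hlift.splits hp (fun i _ _ huv => (ih i huv).1) hsplit⟩
    · rintro ⟨Θ, hΘ, hsplit⟩
      obtain ⟨Δ, hΔ, hlift⟩ := (hR s t hst).2 a Θ hΘ
      exact ⟨Δ, hΔ, (hlift.swap fun _ _ h => h).splits hp (fun i _ _ hvu => (ih i hvu).2) hsplit⟩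

variable (L) in
def SameSat (s t : S) : Prop := ∀ φ : SForm Act, sat L s φ ↔ sat L t φ

theorem exists_sat_forall_sat_imp_sameSat (G : Finset S) (u : S) :
    ∃ φ, sat L u φ ∧ ∀ v ∈ G, sat L v φ → SameSat L u v := by
  classical
  induction G using Finset.induction_on with
  | empty => exact ⟨.top, trivial, by simp⟩
  | insert v G _ ih =>
    obtain ⟨φ, hu, hG⟩ := ih
    by_cases huv : SameSat L u v
    · exact ⟨φ, hu, Finset.forall_mem_insert _ _ _ |>.2 ⟨fun _ => huv, hG⟩⟩
    obtain ⟨ψ, huψ, hvψ⟩ : ∃ ψ, sat L u ψ ∧ ¬ sat L v ψ := by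
      obtain ⟨ψ, hψ⟩ := not_forall.1 huv
      by_cases huψ : sat L u ψ
      · exact ⟨ψ, huψ, fun hvψ => hψ (iff_of_true huψ hvψ)⟩
      · exact ⟨.neg ψ, huψ, fun hvψ => hψ (iff_of_false huψ hvψ)⟩
    refine ⟨.and φ ψ, ⟨hu, huψ⟩, Finset.forall_mem_insert _ _ _ |>.2 ⟨?_, fun w hw h => hG w hw h.1⟩⟩
    exact fun h => absurd h.2 hvψ

theorem SameSat.exists_lift (hfb : FinitelyBranching L) {s t : S} (hst : SameSat L s t) {a : Act}
    {Δ : FinDist S} (hΔ : L.trans s a Δ) : ∃ Θ, L.trans t a Θ ∧ Lift (SameSat L) Δ Θ := by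
  classical
  let G := (hfb t).toFinset.biUnion fun x => x.2.w.support
  choose χ hχ hχG using exists_sat_forall_sat_imp_sameSat (L := L) G
  have hp (i : Fin Δ.w.support.card) : 0 ≤ Δ.w (Δ.enum i) := Δ.nonneg _
  have hs : sat L s (.dia a _ _ hp Δ.sum_w_enum fun i => χ (Δ.enum i)) :=
    ⟨Δ, hΔ, fun i => FinDist.point (Δ.enum i), Δ.w_eq_sum_enum,
      fun i u hu => FinDist.mem_support_point_w hu ▸ hχ _⟩
  obtain ⟨Θ, hΘ, Θs, hΘw, hΘs⟩ := (hst _).1 hs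
  refine ⟨Θ, hΘ, Lift.convex_fin _ hp Δ.sum_w_enum _ Θs
    (fun i => Lift.point_left fun v hv => ?_) Δ Θ Δ.w_eq_sum_enum hΘw⟩
  have hvΘ : v ∈ Θ.w.support := FinDist.mem_support_of_w_eq_sum hp hΘw
    (Finsupp.mem_support_iff.1 (Δ.enum_mem_support i)) hv
  exact hχG _ v (Finset.mem_biUnion.2 ⟨(a, Θ), (hfb t).mem_toFinset.2 hΘ, hvΘ⟩) (hΘs i v hv)

theorem isBisimulation_sameSat (hfb : FinitelyBranching L) : IsBisimulation L (SameSat L) :=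
  .of_symm (fun _ _ h φ => (h φ).symm) fun _ _ hst _ _ hΔ => hst.exists_lift hfb hΔ

end Adequacy

/-- Adequacy: in a finitely branching pLTS, two states are probabilistically
bisimilar iff they satisfy exactly the same formulae of the logic `L`. -/
theorem bisim_iff_same_formulas {S Act : Type*} (L : PLTS S Act)
    (hfb : FinitelyBranching L) (s t : S) :
    Bisim L s t ↔ ∀ φ : SForm Act, (sat L s φ ↔ sat L t φ) :=
  ⟨fun ⟨_, hR, hst⟩ φ => sat_iff_of_isBisimulation hR φ hst,
    fun h => ⟨SameSat L, isBisimulation_sameSat hfb, h⟩⟩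
end
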